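/- arXiv:1901.02336 — 5 statements merged into one kernel-verified Lean document; each statement's English description precedes it below -/
import Mathlib

section
/- Let (W,S) be a Coxeter system, K an integral domain, and V a free K-module of finite rank with a K-linear W-action together with elements α_s ∈ V and α_s^∨ ∈ V* for each s ∈ S, satisfying ⟨α_s^∨, α_s⟩ = 2, s(v) = v − ⟨α_s^∨, v⟩α_s for all v ∈ V, α_s^∨ surjective, and α_s ≠ 0. If w ∈ W and s, s' ∈ S satisfy w s w⁻¹ = s', then w(α_s) = c·α_{s'} for some unit c ∈ K^×. -/
/-!
Conjugating the reflection `s` by `w` gives the reflection `v ↦ v - ⟨α_s^∨, w⁻¹ v⟩ • w(α_s)`,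
while `w s w⁻¹ = s'` acts as `v ↦ v - ⟨α_{s'}^∨, v⟩ • α_{s'}`. Hence the two rank-one maps
`⟨α_{s'}^∨, ·⟩ • α_{s'}` and `⟨α_s^∨, w⁻¹ ·⟩ • w(α_s)` agree; since both linear forms take the
value `1`, each of `α_{s'}` and `w(α_s)` is a scalar multiple of the other, and as `α_{s'} ≠ 0`
in a torsion-free module the two scalars are mutually inverse.
-/

theorem Representation.conj_apply_eq_sub_smul {k G V : Type*} [CommSemiring k] [Group G]
    [AddCommGroup V] [Module k V] (ρ : Representation k G V) {s : G} {φ : V →ₗ[k] k} {a : V}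
    (hs : ∀ v, ρ s v = v - φ v • a) (w : G) (v : V) :
    ρ (w * s * w⁻¹) v = v - φ (ρ w⁻¹ v) • ρ w a := by
  simp only [map_mul, Module.End.mul_apply, hs, map_sub, map_smul, Representation.self_inv_apply]

theorem exists_unit_smul_eq_of_smul_eq_smul {R M : Type*} [CommRing R] [IsDomain R]
    [AddCommGroup M] [Module R M] [Module.IsTorsionFree R M] {f g : M →ₗ[R] R}
    (hf : Function.Surjective f) (hg : Function.Surjective g) {x y : M} (hx : x ≠ 0)
    (h : ∀ v, f v • x = g v • y) : ∃ c : Rˣ, y = (c : R) • x := by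
  obtain ⟨u, hu⟩ := hf 1
  obtain ⟨v, hv⟩ := hg 1
  have hxy : x = g u • y := by simpa [hu] using h u
  have hyx : y = f v • x := by simpa [hv] using (h v).symm
  have hunit : g u * f v = 1 := by
    refine smul_left_injective R hx ?_
    calc (g u * f v) • x = g u • y := by rw [mul_smul, ← hyx]
      _ = (1 : R) • x := by rw [one_smul, ← hxy]
  exact ⟨⟨f v, g u, by rw [mul_comm, hunit], hunit⟩, hyx⟩

theorem statement0_general {B W : Type} [Group W] {M : CoxeterMatrix B}
    (cs : CoxeterSystem M W)
    (K : Type) [CommRing K] [IsDomain K]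
    (V : Type) [AddCommGroup V] [Module K V] [Module.Free K V]
    (ρ : Representation K W V)
    (α : B → V) (cα : B → (V →ₗ[K] K))
    (hrefl : ∀ (i : B) (v : V), ρ (cs.simple i) v = v - cα i v • α i)
    (hsurj : ∀ i : B, Function.Surjective (cα i))
    (hne : ∀ i : B, α i ≠ 0)
    (w : W) (i i' : B) (hconj : w * cs.simple i * w⁻¹ = cs.simple i') :
    ∃ c : Kˣ, ρ w (α i) = (c : K) • α i' := by
  have hrank_one : ∀ v, cα i' v • α i' = (cα i ∘ₗ ρ w⁻¹) v • ρ w (α i) := by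
    intro v
    have hreflect := hrefl i' v
    rw [← hconj, ρ.conj_apply_eq_sub_smul (hrefl i)] at hreflect
    exact (sub_right_injective hreflect).symm
  exact exists_unit_smul_eq_of_smul_eq_smul (g := cα i ∘ₗ ρ w⁻¹) (hsurj i')
    ((hsurj i).comp (ρ.apply_bijective w⁻¹).surjective) (hne i') hrank_one

/-- Given a Coxeter system `(W,S)`, an integral domain `K`, and a free `K`-module
`V` of finite rank with a linear `W`-action together with roots `α_s ∈ V` and coroots
`α_s^∨ ∈ V*` satisfying `⟨α_s^∨,α_s⟩ = 2`, `s(v) = v − ⟨α_s^∨,v⟩α_s`, `α_s^∨` surjective and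
`α_s ≠ 0`: if `w s w⁻¹ = s'` for `s, s' ∈ S` then `w(α_s) = c • α_{s'}` for a unit `c ∈ K^×`. -/
theorem statement0 {B W : Type} [Group W] [Finite B] {M : CoxeterMatrix B}
    (cs : CoxeterSystem M W)
    (K : Type) [CommRing K] [IsDomain K] [IsNoetherianRing K]
    (V : Type) [AddCommGroup V] [Module K V] [Module.Free K V] [Module.Finite K V]
    (ρ : Representation K W V)
    (α : B → V) (cα : B → (V →ₗ[K] K))
    (h2 : ∀ i : B, cα i (α i) = 2)
    (hrefl : ∀ (i : B) (v : V), ρ (cs.simple i) v = v - cα i v • α i)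
    (hsurj : ∀ i : B, Function.Surjective (cα i))
    (hne : ∀ i : B, α i ≠ 0)
    (w : W) (i i' : B) (hconj : w * cs.simple i * w⁻¹ = cs.simple i') :
    ∃ c : Kˣ, ρ w (α i) = (c : K) • α i' :=
  statement0_general cs K V ρ α cα hrefl hsurj hne w i i' hconj
end

section
/- With V, α_s, α_s^∨ as in the standing assumptions and R = Sym(V), for any s ∈ S and any δ_s ∈ V with ⟨α_s^∨, δ_s⟩ = 1, we have R = R^s ⊕ δ_s·R^s, where R^s denotes the subring of s-invariant elements of R. -/
/-!
If `σ` is an involution of a commutative ring and `t` an element moved by `σ`, then `t` is a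
root of `X² - (t + σ t) X + t σ t`, whose coefficients are `σ`-invariant. Hence the invariants
plus `t` times the invariants form a subalgebra, and applying `σ` to `g + t h = g' + t h'`
gives `(t - σ t)(h - h') = 0`, so the decomposition is unique in a domain. For `σ = s` acting
on `Sym(V)` and `t = δ_s`, every `v ∈ V` is `(v - ⟨α_s^∨, v⟩ δ_s) + ⟨α_s^∨, v⟩ δ_s` with the
first summand `s`-invariant, and `δ_s - s δ_s = α_s ≠ 0`.
-/

/-- The embedding of `V = K^n` as the degree-one part of `R = Sym(V) = K[X₁,…,Xₙ]`. -/
noncomputable def linP {K : Type} [CommRing K] {n : ℕ} (v : Fin n → K) :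
    MvPolynomial (Fin n) K :=
  ∑ i, MvPolynomial.C (v i) * MvPolynomial.X i

/-- The extension of the `W`-action on `V` to `R = Sym(V)` by algebra maps. -/
noncomputable def actR {K W : Type} [CommRing K] [Group W] {n : ℕ}
    (π : Representation K W (Fin n → K)) (w : W) :
    MvPolynomial (Fin n) K →ₐ[K] MvPolynomial (Fin n) K :=
  MvPolynomial.aeval fun i => linP (π w (Pi.single i 1))

open MvPolynomial

section FixedAddMulFixed

variable {A : Type*} [CommRing A]

theorem exists_fixed_add_mul_fixed_of_mem_adjoin {R : Type*} [CommSemiring R] [Algebra R A]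
    (σ : A →ₐ[R] A) {t : A} (ht : σ (σ t) = t) {s : Set A}
    (hs : ∀ x ∈ s, ∃ g h, σ g = g ∧ σ h = h ∧ x = g + t * h)
    {q : A} (hq : q ∈ Algebra.adjoin R s) :
    ∃ g h, σ g = g ∧ σ h = h ∧ q = g + t * h := by
  induction hq using Algebra.adjoin_induction with
  | mem x hx => exact hs x hx
  | algebraMap r => exact ⟨algebraMap R A r, 0, σ.commutes r, map_zero σ, by ring⟩
  | add x y _ _ hx hy =>
    obtain ⟨g₁, h₁, hg₁, hh₁, rfl⟩ := hx
    obtain ⟨g₂, h₂, hg₂, hh₂, rfl⟩ := hy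
    exact ⟨g₁ + g₂, h₁ + h₂, by rw [map_add, hg₁, hg₂], by rw [map_add, hh₁, hh₂], by ring⟩
  | mul x y _ _ hx hy =>
    obtain ⟨g₁, h₁, hg₁, hh₁, rfl⟩ := hx
    obtain ⟨g₂, h₂, hg₂, hh₂, rfl⟩ := hy
    -- `t² = (t + σ t) t - t σ t`
    refine ⟨g₁ * g₂ - t * σ t * (h₁ * h₂), g₁ * h₂ + g₂ * h₁ + (t + σ t) * (h₁ * h₂), ?_, ?_, ?_⟩
    · simp only [map_sub, map_mul, ht, hg₁, hg₂, hh₁, hh₂]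
      ring
    · simp only [map_add, map_mul, ht, hg₁, hg₂, hh₁, hh₂]
      ring
    · ring

theorem eq_and_eq_of_fixed_add_mul_fixed [NoZeroDivisors A] {F : Type*} [FunLike F A A]
    [RingHomClass F A A] (σ : F) {t g h g' h' : A} (ht : σ t ≠ t)
    (hg : σ g = g) (hh : σ h = h) (hg' : σ g' = g') (hh' : σ h' = h')
    (heq : g + t * h = g' + t * h') : g = g' ∧ h = h' := by
  have hσeq : g + σ t * h = g' + σ t * h' := by
    simpa only [map_add, map_mul, hg, hh, hg', hh'] using congrArg σ heq
  have hprod : (t - σ t) * (h - h') = 0 := by linear_combination heq - hσeq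
  have hh_eq : h = h' :=
    sub_eq_zero.mp ((mul_eq_zero.mp hprod).resolve_left (sub_ne_zero.mpr ht.symm))
  subst hh_eq
  exact ⟨add_right_cancel heq, rfl⟩

end FixedAddMulFixed

section linP

variable {K : Type} [CommRing K] {n : ℕ}

theorem linP_eq_linearCombination (v : Fin n → K) :
    linP v = Fintype.linearCombination K X v := by
  simp only [linP, Fintype.linearCombination_apply, smul_eq_C_mul]

theorem linP_injective : Function.Injective (linP : (Fin n → K) → MvPolynomial (Fin n) K) := by
  rw [show linP = Fintype.linearCombination K X from _root_.funext linP_eq_linearCombination]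
  exact linearIndependent_iff_injective_fintypeLinearCombination.mp (linearIndependent_X _ _)

theorem linP_single (j : Fin n) : linP (Pi.single j (1 : K)) = X j := by
  simp [linP, Pi.single_apply]

theorem actR_linP {W : Type} [Group W] (π : Representation K W (Fin n → K)) (w : W)
    (v : Fin n → K) : actR π w (linP v) = linP (π w v) := by
  simp only [linP_eq_linearCombination]
  suffices (actR π w).toLinearMap ∘ₗ Fintype.linearCombination K X =
      Fintype.linearCombination K X ∘ₗ π w from LinearMap.congr_fun this v
  ext j
  simp [actR, linP_eq_linearCombination]

end linP

theorem statement1_general {B W : Type} [Group W] {M : CoxeterMatrix B}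
    (cs : CoxeterSystem M W)
    (K : Type) [CommRing K] [IsDomain K] (n : ℕ)
    (π : Representation K W (Fin n → K))
    (α : B → (Fin n → K)) (cα : B → ((Fin n → K) →ₗ[K] K))
    (hrefl : ∀ (i : B) (v : Fin n → K), π (cs.simple i) v = v - cα i v • α i)
    (hne : ∀ i : B, α i ≠ 0)
    (i : B) (δ : Fin n → K) (hδ : cα i δ = 1)
    (f : MvPolynomial (Fin n) K) :
    ∃! p : MvPolynomial (Fin n) K × MvPolynomial (Fin n) K,
      actR π (cs.simple i) p.1 = p.1 ∧ actR π (cs.simple i) p.2 = p.2 ∧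
        f = p.1 + linP δ * p.2 := by
  set σ := actR π (cs.simple i)
  have hσ_invol : σ (σ (linP δ)) = linP δ := by
    rw [actR_linP, actR_linP, ← Module.End.mul_apply, ← map_mul, cs.simple_mul_simple_self,
      map_one, Module.End.one_apply]
  have hσ_moves : σ (linP δ) ≠ linP δ := by
    rw [actR_linP, hrefl, hδ, one_smul, Ne, linP_injective.eq_iff, sub_eq_self]
    exact hne i
  have hlin : ∀ v, ∃ g h, σ g = g ∧ σ h = h ∧ linP v = g + linP δ * h := fun v =>
    have hv : cα i (v - cα i v • δ) = 0 := by simp [hδ]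
    ⟨linP (v - cα i v • δ), C (cα i v), by rw [actR_linP, hrefl, hv, zero_smul, sub_zero],
      (actR π _).commutes _,
      by simp only [linP_eq_linearCombination, map_sub, map_smul, smul_eq_C_mul]; ring⟩
  have hf_mem : f ∈ Algebra.adjoin K (Set.range X) := adjoin_range_X (R := K) ▸ Algebra.mem_top
  obtain ⟨g, h, hg, hh, hf⟩ := exists_fixed_add_mul_fixed_of_mem_adjoin σ hσ_invol
    (by rintro _ ⟨j, rfl⟩; exact linP_single (K := K) j ▸ hlin _) hf_mem
  refine ⟨(g, h), ⟨hg, hh, hf⟩, ?_⟩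
  rintro ⟨g', h'⟩ ⟨hg', hh', hf'⟩
  obtain ⟨rfl, rfl⟩ :=
    eq_and_eq_of_fixed_add_mul_fixed σ hσ_moves hg' hh' hg hh (hf'.symm.trans hf)
  rfl

/-- With `R = Sym(V)` and `δ_s ∈ V` such that `⟨α_s^∨, δ_s⟩ = 1`, we have
`R = R^s ⊕ δ_s·R^s`: every `f ∈ R` is uniquely `f = g + δ_s·h` with `g, h` `s`-invariant. -/
theorem statement1 {B W : Type} [Group W] [Finite B] {M : CoxeterMatrix B}
    (cs : CoxeterSystem M W)
    (K : Type) [CommRing K] [IsDomain K] [IsNoetherianRing K] (n : ℕ)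
    (π : Representation K W (Fin n → K))
    (α : B → (Fin n → K)) (cα : B → ((Fin n → K) →ₗ[K] K))
    (h2 : ∀ i : B, cα i (α i) = 2)
    (hrefl : ∀ (i : B) (v : Fin n → K), π (cs.simple i) v = v - cα i v • α i)
    (hsurj : ∀ i : B, Function.Surjective (cα i))
    (hne : ∀ i : B, α i ≠ 0)
    (i : B) (δ : Fin n → K) (hδ : cα i δ = 1)
    (f : MvPolynomial (Fin n) K) :
    ∃! p : MvPolynomial (Fin n) K × MvPolynomial (Fin n) K,
      actR π (cs.simple i) p.1 = p.1 ∧ actR π (cs.simple i) p.2 = p.2 ∧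
        f = p.1 + linP δ * p.2 :=
  statement1_general cs K n π α cα hrefl hne i δ hδ f
end

section
/- Let x̲ = (s₁,…,s_l) ∈ S^l and for e ∈ {0,1}^l let x̲^e = s₁^{e₁}⋯s_l^{e_l} ∈ W. Assign to each index i the label U if x_{i-1} s_i > x_{i-1} (Bruhat order) and D otherwise, where x_i = s₁^{e₁}⋯s_i^{e_i}. If e, f ∈ {0,1}^l satisfy x̲^e = x̲^f and have the same label at every index, then e = f. -/
/-!
Downward induction on `k`, starting from `x^e = x^f`: if `x_{k+1}^e = x_{k+1}^f` but `e` and `f`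
differ at the letter `s_{k+1}`, then `x_k^e s_{k+1} = x_k^f`, and since right multiplication by
`s_{k+1}` toggles whether `s_{k+1}` is a right descent, the labels at that index would be opposite.
So the letters agree, and cancelling them gives `x_k^e = x_k^f`.
-/

/-- The partial product `x_k = s₁^{e₁} ⋯ s_k^{e_k}` attached to a word `x = (s₁,…,s_l)`
and a 01-sequence `e`. -/
noncomputable def pprodF {B W : Type} [Group W] {M : CoxeterMatrix B} (cs : CoxeterSystem M W)
    (x : List B) (e : Fin x.length → Bool) (k : ℕ) : W :=
  (((List.ofFn fun j : Fin x.length => if e j then cs.simple (x.get j) else 1)).take k).prod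

/-- The label of `e` at index `k` is `U` iff `x_{k-1} s_k > x_{k-1}`
(equivalently `ℓ(x_{k-1} s_k) > ℓ(x_{k-1})`). -/
noncomputable def IsU {B W : Type} [Group W] {M : CoxeterMatrix B} (cs : CoxeterSystem M W)
    (x : List B) (e : Fin x.length → Bool) (k : Fin x.length) : Prop :=
  cs.length (pprodF cs x e k * cs.simple (x.get k)) > cs.length (pprodF cs x e k)

namespace CoxeterSystem

variable {B W : Type} [Group W] {M : CoxeterMatrix B} (cs : CoxeterSystem M W)
  (x : List B) (e f : Fin x.length → Bool)

theorem pprodF_succ (k : Fin x.length) :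
    pprodF cs x e (k + 1) = pprodF cs x e k * if e k then cs.simple (x.get k) else 1 := by
  rw [pprodF, pprodF, List.prod_take_succ _ _ (by simp)]
  simp

theorem isU_iff_not_isRightDescent (k : Fin x.length) :
    IsU cs x e k ↔ ¬cs.IsRightDescent (pprodF cs x e k) (x.get k) := by
  have := cs.length_mul_simple_ne (pprodF cs x e k) (x.get k)
  rw [IsU, IsRightDescent]
  omega

variable {x e f}

theorem not_isU_iff_of_pprodF_mul_simple_eq {k : Fin x.length}
    (h : pprodF cs x e k * cs.simple (x.get k) = pprodF cs x f k) :
    ¬(IsU cs x e k ↔ IsU cs x f k) := by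
  rw [isU_iff_not_isRightDescent, isU_iff_not_isRightDescent, ← h,
    ← isRightDescent_iff_not_isRightDescent_mul]
  tauto

theorem eq_and_pprodF_eq_of_pprodF_succ_eq {k : Fin x.length}
    (hlab : IsU cs x e k ↔ IsU cs x f k)
    (hsucc : pprodF cs x e (k + 1) = pprodF cs x f (k + 1)) :
    e k = f k ∧ pprodF cs x e k = pprodF cs x f k := by
  rw [pprodF_succ, pprodF_succ] at hsucc
  cases he : e k <;> cases hf : f k <;>
    simp only [he, hf, if_true, if_false, Bool.false_eq_true, mul_one] at hsucc
  · exact ⟨rfl, hsucc⟩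
  · exact (not_isU_iff_of_pprodF_mul_simple_eq cs hsucc.symm hlab.symm).elim
  · exact (not_isU_iff_of_pprodF_mul_simple_eq cs hsucc hlab).elim
  · exact ⟨rfl, mul_right_cancel hsucc⟩

theorem pprodF_eq_of_isU_iff {k : ℕ} (hk : k ≤ x.length)
    (hprod : pprodF cs x e x.length = pprodF cs x f x.length)
    (hlab : ∀ j : Fin x.length, IsU cs x e j ↔ IsU cs x f j) :
    pprodF cs x e k = pprodF cs x f k := by
  induction hk using Nat.decreasingInduction with
  | self => exact hprod
  | of_succ j hj ih => exact (eq_and_pprodF_eq_of_pprodF_succ_eq cs (k := ⟨j, hj⟩) (hlab _) ih).2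

end CoxeterSystem

/-- If `e, f ∈ {0,1}^l` satisfy `x^e = x^f` and have the same label (U or D)
at every index, then `e = f`. -/
theorem statement5 {B W : Type} [Group W] {M : CoxeterMatrix B} (cs : CoxeterSystem M W)
    (x : List B) (e f : Fin x.length → Bool)
    (hprod : pprodF cs x e x.length = pprodF cs x f x.length)
    (hlab : ∀ k : Fin x.length, IsU cs x e k ↔ IsU cs x f k) :
    e = f :=
  funext fun k => (cs.eq_and_pprodF_eq_of_pprodF_succ_eq (hlab k)
    (cs.pprodF_eq_of_isU_iff k.2 hprod hlab)).1
end

section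
/- For a reflection w (i.e., w conjugate in W to some s ∈ S), the set {t reflection : tw < w} has cardinality ℓ(w) for every w ∈ W, and for s ∈ S one has the identity {t reflection : tw < w} = {s} ∪ {s t s : t reflection, t(sw) < sw} whenever sw < w. -/
/-!
Following Humphreys (*Reflection Groups and Coxeter Groups*, §5.8), let `s i` act on `W × ZMod 2`
by `(t, z) ↦ (s i * t * s i, z + [t = s i])`. Along a word `ω` the second coordinate adds up the
occurrences of `t` in the right inversion sequence of `ω`; for the braid word `(s i * s j) ^ M i j`
every reflection occurs an even number of times, so the Coxeter relations hold and the action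
factors through `W`. Hence the parity `η w t` (`inversionParity`) of the number of occurrences
of `t` depends only on `w`, and it is a cocycle: `η (u * v) t = η u (v * t * v⁻¹) + η v t`.
This gives `η t t = 1` for a reflection `t`, and then `η w t = 1` exactly when `ℓ (w * t) < ℓ w`.
So the inversion sequence of a reduced word, which has no repetitions, lists precisely the
inversions of its product: its length is the number of inversions, and the left inversion
sequence of `i :: ω` is `s i` followed by the conjugates by `s i` of that of `ω`.
-/

theorem List.even_count_of_getElem_add_eq {α : Type*} [BEq α] (a : α) {L : List α} {p : ℕ}
    (hL : L.length = 2 * p) (h : ∀ k (hk : k < p), L[p + k] = L[k]) : Even (L.count a) := by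
  have : L.drop p = L.take p := by
    apply ext_getElem
    · simp only [length_drop, length_take, hL]
      omega
    · intro k h1 _
      simp only [getElem_drop, getElem_take]
      exact h k (by simp only [length_drop, hL] at h1; omega)
  rw [← take_append_drop p L, count_append, this]
  exact ⟨_, rfl⟩

namespace CoxeterSystem

open List

variable {B W : Type*} [Group W] {M : CoxeterMatrix B} (cs : CoxeterSystem M W)

local prefix:100 "s " => cs.simple
local prefix:100 "π " => cs.wordProd
local prefix:100 "ℓ " => cs.length
local prefix:100 "ris " => cs.rightInvSeq
local prefix:100 "lis " => cs.leftInvSeq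

theorem alternatingWord_two_mul (i j : B) (p : ℕ) :
    alternatingWord i j (2 * p) = (replicate p [i, j]).flatten := by
  induction p with
  | zero => rfl
  | succ p ih =>
    rw [mul_add, mul_one, alternatingWord_succ', alternatingWord_succ', ih, replicate_succ,
      flatten_cons]
    simp

theorem reverse_alternatingWord_two_mul (i j : B) (p : ℕ) :
    (alternatingWord i j (2 * p)).reverse = alternatingWord j i (2 * p) := by
  simp only [alternatingWord_two_mul, reverse_flatten, map_replicate, reverse_replicate]
  rfl

theorem even_count_rightInvSeq_alternatingWord [DecidableEq W] (i j : B) (t : W) :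
    Even ((ris (alternatingWord i j (2 * M i j))).count t) := by
  rw [← reverse_alternatingWord_two_mul, rightInvSeq_reverse, count_reverse]
  refine even_count_of_getElem_add_eq t (p := M i j) (by simp) fun k hk => ?_
  rw [getElem_leftInvSeq_alternatingWord _ _ _ _ _ (by omega),
    getElem_leftInvSeq_alternatingWord _ _ _ _ _ (by omega), prod_alternatingWord_eq_mul_pow,
    prod_alternatingWord_eq_mul_pow, show (2 * (M i j + k) + 1) / 2 = M i j + k by omega,
    show (2 * k + 1) / 2 = k by omega, pow_add, simple_mul_simple_pow, one_mul,
    if_neg (Nat.not_even_two_mul_add_one _), if_neg (Nat.not_even_two_mul_add_one _)]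

section InversionRep

variable [DecidableEq W]

def simpleInversionPerm (i : B) : Equiv.Perm (W × ZMod 2) :=
  Function.Involutive.toPerm (fun p => (s i * p.1 * s i, p.2 + if p.1 = s i then 1 else 0))
    fun ⟨t, z⟩ => by
      have hconj : s i * t * s i = s i ↔ t = s i := by
        constructor <;> intro h
        · simpa [mul_assoc] using congr_arg (fun x => s i * x * s i) h
        · simp [h]
      by_cases ht : t = s i
      · simp [ht, add_assoc, CharTwo.add_self_eq_zero]
      · dsimp only
        rw [if_neg (hconj.not.mpr ht), if_neg ht]
        simp [mul_assoc]

theorem simpleInversionPerm_apply (i : B) (t : W) (z : ZMod 2) :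
    cs.simpleInversionPerm i (t, z) = (s i * t * s i, z + if t = s i then 1 else 0) :=
  rfl

theorem prod_map_simpleInversionPerm_apply (ω : List B) (t : W) (z : ZMod 2) :
    (ω.map cs.simpleInversionPerm).prod (t, z) =
      (π ω * t * (π ω)⁻¹, z + (ris ω).count t) := by
  induction ω with
  | nil => simp
  | cons i ω ih =>
    have hconj : π ω * t * (π ω)⁻¹ = s i ↔ (π ω)⁻¹ * s i * π ω = t := by
      constructor <;> intro h
      · rw [← h]; group
      · rw [← h]; group
    simp only [map_cons, prod_cons, Equiv.Perm.mul_apply, ih, simpleInversionPerm_apply,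
      rightInvSeq, count_cons, wordProd_cons, mul_inv_rev, inv_simple, hconj, beq_iff_eq]
    ext
    · simp only [mul_assoc]
    · split_ifs <;> simp [add_assoc]

theorem isLiftable_simpleInversionPerm : M.IsLiftable cs.simpleInversionPerm := by
  intro i j
  have hword : ((alternatingWord i j (2 * M i j)).map cs.simpleInversionPerm).prod =
      (cs.simpleInversionPerm i * cs.simpleInversionPerm j) ^ M i j := by
    simp [alternatingWord_two_mul, map_flatten, prod_flatten, map_replicate, prod_replicate]
  have hπ : π (alternatingWord i j (2 * M i j)) = 1 := by
    simp [alternatingWord_two_mul, wordProd, map_flatten, prod_flatten, map_replicate,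
      prod_replicate, simple_mul_simple_pow]
  ext ⟨t, z⟩ : 1
  obtain ⟨c, hc⟩ := cs.even_count_rightInvSeq_alternatingWord i j t
  rw [← hword, prod_map_simpleInversionPerm_apply, hπ, hc]
  simp [CharTwo.add_self_eq_zero]

def inversionRep : W →* Equiv.Perm (W × ZMod 2) :=
  cs.lift ⟨cs.simpleInversionPerm, cs.isLiftable_simpleInversionPerm⟩

def inversionParity (w t : W) : ZMod 2 :=
  (cs.inversionRep w (t, 0)).2

theorem inversionRep_wordProd_apply (ω : List B) (t : W) (z : ZMod 2) :
    cs.inversionRep (π ω) (t, z) = (π ω * t * (π ω)⁻¹, z + (ris ω).count t) := by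
  rw [← prod_map_simpleInversionPerm_apply, wordProd, map_list_prod, map_map]
  congr 3
  exact funext (cs.lift_apply_simple cs.isLiftable_simpleInversionPerm)

theorem inversionParity_wordProd (ω : List B) (t : W) :
    cs.inversionParity (π ω) t = (ris ω).count t := by
  rw [inversionParity, inversionRep_wordProd_apply, zero_add]

theorem inversionRep_apply (w t : W) (z : ZMod 2) :
    cs.inversionRep w (t, z) = (w * t * w⁻¹, z + cs.inversionParity w t) := by
  obtain ⟨ω, rfl⟩ := cs.wordProd_surjective w
  rw [inversionRep_wordProd_apply, inversionParity_wordProd]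

theorem inversionParity_mul (u v t : W) :
    cs.inversionParity (u * v) t =
      cs.inversionParity u (v * t * v⁻¹) + cs.inversionParity v t := by
  rw [inversionParity, map_mul, Equiv.Perm.mul_apply, inversionRep_apply, inversionRep_apply,
    zero_add, add_comm]

theorem inversionParity_simple (i : B) (t : W) :
    cs.inversionParity (s i) t = if t = s i then 1 else 0 := by
  rw [← wordProd_singleton, inversionParity_wordProd, rightInvSeq_singleton, count_singleton]
  by_cases h : t = s i
  · simp [h]
  · simp [h, Ne.symm h]

theorem inversionParity_one (t : W) : cs.inversionParity 1 t = 0 := by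
  rw [inversionParity, map_one]
  rfl

theorem inversionParity_self {t : W} (ht : cs.IsReflection t) : cs.inversionParity t t = 1 := by
  obtain ⟨x, i, rfl⟩ := ht
  have hxs : x⁻¹ * (x * s i * x⁻¹) * x⁻¹⁻¹ = s i := by group
  have hinv : cs.inversionParity x (s i) + cs.inversionParity x⁻¹ (x * s i * x⁻¹) = 0 := by
    nth_rw 1 [← hxs]
    rw [← inversionParity_mul, mul_inv_cancel, inversionParity_one]
  rw [inversionParity_mul, hxs, inversionParity_mul, inversionParity_simple, if_pos rfl,
    mul_inv_cancel_right]
  linear_combination hinv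

theorem mem_rightInvSeq_of_inversionParity_eq_one {ω : List B} {t : W}
    (h : cs.inversionParity (π ω) t = 1) : t ∈ ris ω := by
  by_contra hmem
  rw [inversionParity_wordProd, count_eq_zero_of_not_mem hmem, Nat.cast_zero] at h
  exact zero_ne_one h

theorem length_mul_lt_of_inversionParity_eq_one {w t : W} (h : cs.inversionParity w t = 1) :
    ℓ (w * t) < ℓ w := by
  obtain ⟨ω, hω, rfl⟩ := cs.exists_isReduced w
  exact (cs.isRightInversion_of_mem_rightInvSeq hω
    (cs.mem_rightInvSeq_of_inversionParity_eq_one h)).2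

theorem IsRightInversion.inversionParity_eq_one {w t : W} (h : cs.IsRightInversion w t) :
    cs.inversionParity w t = 1 := by
  obtain ⟨ht, hlt⟩ := h
  by_contra hne
  have hzero : cs.inversionParity w t = 0 :=
    (show ∀ a : ZMod 2, a ≠ 1 → a = 0 by decide) _ hne
  have hwt : cs.inversionParity (w * t) t = 1 := by
    rw [inversionParity_mul, ht.mul_self, one_mul, ht.inv, hzero, cs.inversionParity_self ht,
      zero_add]
  have := cs.length_mul_lt_of_inversionParity_eq_one hwt
  rw [mul_assoc, ht.mul_self, mul_one] at this
  omega

end InversionRep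

theorem mem_rightInvSeq_iff {ω : List B} (hω : cs.IsReduced ω) {t : W} :
    t ∈ ris ω ↔ cs.IsRightInversion (π ω) t := by
  classical
  exact ⟨cs.isRightInversion_of_mem_rightInvSeq hω,
      fun h => cs.mem_rightInvSeq_of_inversionParity_eq_one h.inversionParity_eq_one⟩

theorem mem_leftInvSeq_iff {ω : List B} (hω : cs.IsReduced ω) {t : W} :
    t ∈ lis ω ↔ cs.IsLeftInversion (π ω) t := by
  rw [← isRightInversion_inv_iff, ← wordProd_reverse, ← cs.mem_rightInvSeq_iff hω.reverse,
    rightInvSeq_reverse, mem_reverse]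

theorem setOf_isLeftInversion_wordProd {ω : List B} (hω : cs.IsReduced ω) :
    {t | cs.IsLeftInversion (π ω) t} = {t | t ∈ lis ω} :=
  Set.ext fun _ => (cs.mem_leftInvSeq_iff hω).symm

theorem finite_setOf_isLeftInversion (w : W) : {t | cs.IsLeftInversion w t}.Finite := by
  obtain ⟨ω, hω, rfl⟩ := cs.exists_isReduced w
  rw [cs.setOf_isLeftInversion_wordProd hω]
  exact (lis ω).finite_toSet

theorem ncard_setOf_isLeftInversion (w : W) : {t | cs.IsLeftInversion w t}.ncard = ℓ w := by
  classical
  obtain ⟨ω, hω, rfl⟩ := cs.exists_isReduced w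
  rw [cs.setOf_isLeftInversion_wordProd hω, ← coe_toFinset, Set.ncard_coe_finset,
    toFinset_card_of_nodup hω.nodup_leftInvSeq, length_leftInvSeq, hω.eq]

theorem setOf_isLeftInversion_eq_insert {w : W} {i : B} (h : ℓ (s i * w) < ℓ w) :
    {t | cs.IsLeftInversion w t} =
      insert (s i) ((fun t => s i * t * s i) '' {t | cs.IsLeftInversion (s i * w) t}) := by
  obtain ⟨ω, hω, hsw⟩ := cs.exists_isReduced (s i * w)
  have hw : w = π (i :: ω) := by rw [wordProd_cons, ← hsw, simple_mul_simple_cancel_left]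
  have hiω : cs.IsReduced (i :: ω) := by
    have := cs.length_simple_mul w i
    rw [IsReduced, ← hw, length_cons, ← hω.eq, ← hsw]
    omega
  rw [hsw, cs.setOf_isLeftInversion_wordProd hω, hw, cs.setOf_isLeftInversion_wordProd hiω]
  ext t
  simp [leftInvSeq]

end CoxeterSystem

/-- For every `w ∈ W`, the set `{t reflection : ℓ(tw) < ℓ(w)}` of left
inversions of `w` is finite of cardinality `ℓ(w)`; and for `s ∈ S` with `sw < w` one has
`{t : tw < w} = {s} ∪ {sts : t reflection, t(sw) < sw}`. -/
theorem statement14 {B W : Type} [Group W] {M : CoxeterMatrix B} (cs : CoxeterSystem M W) :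
    (∀ w : W, {t : W | cs.IsLeftInversion w t}.Finite ∧
        {t : W | cs.IsLeftInversion w t}.ncard = cs.length w) ∧
      (∀ (i : B) (w : W), cs.length (cs.simple i * w) < cs.length w →
        {t : W | cs.IsLeftInversion w t} =
          insert (cs.simple i)
            ((fun t => cs.simple i * t * cs.simple i) ''
              {t : W | cs.IsLeftInversion (cs.simple i * w) t})) :=
  ⟨fun w => ⟨cs.finite_setOf_isLeftInversion w, cs.ncard_setOf_isLeftInversion w⟩,
    fun _ _ => cs.setOf_isLeftInversion_eq_insert⟩
end

section
/- Let K be a field, M a finitely generated graded free left R-module of graded rank p (a Laurent polynomial in v), and 0 = M₀ ⊆ M₁ ⊆ ⋯ ⊆ M_r = M a filtration by graded submodules. Suppose for each i there is a graded free left R-submodule N_i ⊆ M_i/M_{i−1} of graded rank q^{(i)} with Σ_i q^{(i)} = p. Then N_i = M_i/M_{i−1} for all i. -/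
/-- A module with a `ℤ`-grading (by `K`-submodules) is graded free of graded rank
`p = Σ_j c(j) vʲ` if it has a finite basis over `R` consisting of homogeneous elements,
with exactly `c(j)` basis elements of degree `-j` (a basis element of degree `-j` spans a
copy of `R(j)`). -/
def IsGradedFreeOfRank (K R₀ : Type) [Field K] {M₀ : Type} [CommRing R₀] [AddCommGroup M₀]
    [Module R₀ M₀] [Module K M₀] (g : ℤ → Submodule K M₀) (c : ℤ →₀ ℕ) : Prop :=
  ∃ (ι : Type) (_ : Fintype ι) (bb : Module.Basis ι R₀ M₀) (d : ι → ℤ),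
    (∀ i : ι, (bb i : M₀) ∈ g (d i)) ∧
      ∀ j : ℤ, c j = Nat.card {i : ι // d i = -j}

/-!
Everything is compared degree by degree over `K`. Multiplying a homogeneous `R`-basis of a graded
free module by the monomials of `R` gives a homogeneous `K`-basis, so the degree-`j` piece of a
graded free module of rank `c` contains `gradedDim n j c` independent vectors, and (when the grading
is internal) is spanned by them. In degree `j`, the pieces of the subquotients `M_i/M_{i-1}` have
dimensions adding up to `dim M_j = gradedDim n j p`, while the degree-`j` pieces of the `N_i` sit
inside them and have dimensions at least `gradedDim n j q⁽ⁱ⁾`, which add up to `gradedDim n j p`. So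
`N_i` and `M_i/M_{i-1}` agree in every degree, and `M_i/M_{i-1}` is the sum of its graded pieces
because `M_i` is a graded submodule.
-/

open Module Submodule

namespace Module.Basis

variable {K W T ι : Type*} [Field K] [AddCommGroup W] [Module K W]
  {g : ι → Submodule K W} (v : Basis T K W) {δ : T → ι} (hv : ∀ t, v t ∈ g (δ t))
include hv

theorem span_fiber_le (j : ι) : span K (Set.range fun t : {t // δ t = j} => v t) ≤ g j :=
  span_le.2 <| Set.range_subset_iff.2 fun ⟨t, ht⟩ => ht ▸ hv t

theorem span_fiber_eq_of_iSupIndep (hg : iSupIndep g) (j : ι) :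
    span K (Set.range fun t : {t // δ t = j} => v t) = g j := by
  refine congrFun ((hg.le_iff_eq_of_iSup_eq_top (eq_top_iff.2 ?_)).1 (v.span_fiber_le hv)) j
  rw [← v.span_eq, span_le]
  rintro _ ⟨t, rfl⟩
  exact mem_iSup_of_mem (δ t) (subset_span ⟨⟨t, rfl⟩, rfl⟩)

omit hv in
theorem finrank_span_fiber (j : ι) [Finite {t // δ t = j}] :
    finrank K (span K (Set.range fun t : {t // δ t = j} => v t)) = Nat.card {t // δ t = j} := by
  have := Fintype.ofFinite {t // δ t = j}
  rw [finrank_span_eq_card (b := fun t : {t // δ t = j} => v t)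
      (v.linearIndependent.comp _ Subtype.val_injective),
    Nat.card_eq_fintype_card]

theorem natCard_fiber_le_finrank (j : ι) [Finite {t // δ t = j}] [FiniteDimensional K (g j)] :
    Nat.card {t // δ t = j} ≤ finrank K (g j) :=
  v.finrank_span_fiber (δ := δ) j ▸ Submodule.finrank_mono (v.span_fiber_le hv j)

theorem finiteDimensional_of_iSupIndep (hg : iSupIndep g) (j : ι) [Finite {t // δ t = j}] :
    FiniteDimensional K (g j) :=
  v.span_fiber_eq_of_iSupIndep hv hg j ▸ FiniteDimensional.span_of_finite K (Set.finite_range _)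

theorem finrank_eq_natCard_fiber (hg : iSupIndep g) (j : ι) [Finite {t // δ t = j}] :
    finrank K (g j) = Nat.card {t // δ t = j} :=
  v.span_fiber_eq_of_iSupIndep hv hg j ▸ v.finrank_span_fiber (δ := δ) j

end Module.Basis

theorem Submodule.finrank_map_add_finrank_inf_ker {K V V₂ : Type*} [Field K] [AddCommGroup V]
    [Module K V] [AddCommGroup V₂] [Module K V₂] (f : V →ₗ[K] V₂) (X : Submodule K V)
    [FiniteDimensional K X] :
    finrank K (X.map f) + finrank K (X ⊓ LinearMap.ker f : Submodule K V) = finrank K X := by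
  have h := LinearMap.finrank_range_add_finrank_ker (f.domRestrict X)
  rwa [LinearMap.range_domRestrict, LinearMap.ker_domRestrict,
    (equivMapOfInjective _ X.injective_subtype _).finrank_eq, map_comap_subtype] at h

section Subquotient

variable {K R M : Type*} [Field K] [Ring R] [AddCommGroup M] [Module R M] [Module K M]
  [SMul K R] [IsScalarTower K R M]

theorem finrank_map_mkQ_add_finrank {A B : Submodule R M} (hAB : A ≤ B) (G : Submodule K M)
    [FiniteDimensional K G] :
    finrank K ((B.restrictScalars K ⊓ G).map (A.mkQ.restrictScalars K)) +
        finrank K (A.restrictScalars K ⊓ G : Submodule K M) =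
      finrank K (B.restrictScalars K ⊓ G : Submodule K M) := by
  have hker : LinearMap.ker (A.mkQ.restrictScalars K) = A.restrictScalars K := by
    rw [LinearMap.ker_restrictScalars, ker_mkQ]
  rw [← finrank_map_add_finrank_inf_ker (A.mkQ.restrictScalars K) (B.restrictScalars K ⊓ G),
    hker, inf_right_comm, inf_of_le_right (restrictScalars_mono K hAB)]

theorem sum_finrank_map_mkQ_add_finrank {F : ℕ → Submodule R M} (hF : ∀ i, F i ≤ F (i + 1))
    (G : Submodule K M) [FiniteDimensional K G] (m : ℕ) :
    ∑ i ∈ Finset.range m,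
        finrank K (((F (i + 1)).restrictScalars K ⊓ G).map ((F i).mkQ.restrictScalars K)) +
        finrank K ((F 0).restrictScalars K ⊓ G : Submodule K M) =
      finrank K ((F m).restrictScalars K ⊓ G : Submodule K M) := by
  induction m with
  | zero => simp
  | succ m ih =>
    rw [Finset.sum_range_succ, add_right_comm, ih, add_comm, finrank_map_mkQ_add_finrank (hF m) G]

theorem restrictScalars_map_mkQ_inf_le {A B C : Submodule R M} (hA : A ≤ B) (hC : C ≤ B)
    (G : Submodule K M) :
    (C.map A.mkQ).restrictScalars K ⊓ G.map (A.mkQ.restrictScalars K) ≤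
      (B.restrictScalars K ⊓ G).map (A.mkQ.restrictScalars K) := by
  rw [inf_comm, restrictScalars_map, map_inf_eq_map_inf_comap, comap_map_eq,
    LinearMap.ker_restrictScalars, ker_mkQ, inf_comm]
  exact map_mono (inf_le_inf_right _ (sup_le (restrictScalars_mono K hC)
    (restrictScalars_mono K hA)))

theorem map_mkQ_eq_of_forall_le {ι : Type*} {g : ι → Submodule K M} {A B C : Submodule R M}
    (hB : B.restrictScalars K = ⨆ j, B.restrictScalars K ⊓ g j) (hC : C ≤ B)
    (h : ∀ j, (B.restrictScalars K ⊓ g j).map (A.mkQ.restrictScalars K) ≤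
      (C.map A.mkQ).restrictScalars K) :
    C.map A.mkQ = B.map A.mkQ := by
  refine le_antisymm (map_mono hC) ?_
  rw [← restrictScalars_le K, restrictScalars_map, hB, Submodule.map_iSup]
  exact iSup_le h

noncomputable def Submodule.comapSubtypeEquivInf (N : Submodule R M) (G : Submodule K M) :
    G.comap (N.subtype.restrictScalars K) ≃ₗ[K] (N.restrictScalars K ⊓ G : Submodule K M) :=
  (equivMapOfInjective (N.subtype.restrictScalars K) N.injective_subtype _).trans
    (LinearEquiv.ofEq _ _ (map_comap_subtype (N.restrictScalars K) G))

end Subquotient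

noncomputable def polyDim (n : ℕ) (e : ℤ) : ℕ :=
  Nat.card {m : Fin n →₀ ℕ // 2 * (m.degree : ℤ) = e}

/-- `dim_K (⊕ₖ R(k)^{c k})_j`, since `R(k)_j = R_{j+k}` and `polyDim n e = dim_K R_e`. -/
noncomputable def gradedDim (n : ℕ) (j : ℤ) : (ℤ →₀ ℕ) →+ ℕ :=
  Finsupp.liftAddHom fun k => AddMonoidHom.mulRight (polyDim n (j + k))

theorem finite_two_mul_degree_eq (n : ℕ) (e : ℤ) :
    Finite {m : Fin n →₀ ℕ // 2 * (m.degree : ℤ) = e} := by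
  refine Finite.of_injective
    (fun m i => (⟨m.1 i, ?_⟩ : Fin (e.toNat + 1))) fun m m' h => ?_
  · have := Finsupp.le_degree i m.1
    have := m.2
    omega
  · exact Subtype.ext (Finsupp.ext fun i => congrArg Fin.val (congrFun h i))

theorem gradedDim_eq_sum (n : ℕ) {ι : Type*} [Fintype ι] (d : ι → ℤ) {c : ℤ →₀ ℕ}
    (hc : ∀ j, c j = Nat.card {i // d i = -j}) (j : ℤ) :
    gradedDim n j c = ∑ i, polyDim n (j - d i) := by
  classical
  have hc' : c = ∑ i, Finsupp.single (-d i) 1 := by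
    ext k
    simp only [hc, Finsupp.finsetSum_apply, Finsupp.single_apply, Finset.sum_boole,
      Nat.card_eq_fintype_card, Fintype.card_subtype, Nat.cast_id]
    congr 1
    ext i
    simp only [Finset.mem_filter, Finset.mem_univ, true_and]
    omega
  simp [hc', gradedDim, sub_eq_add_neg]

def IsCompatibleGrading (K : Type*) [Field K] (n : ℕ) {W : Type*} [AddCommGroup W]
    [Module (MvPolynomial (Fin n) K) W] [Module K W] (g : ℤ → Submodule K W) : Prop :=
  ∀ (d : ℕ) (f : MvPolynomial (Fin n) K), f.IsHomogeneous d →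
    ∀ (j : ℤ), ∀ m ∈ g j, f • m ∈ g (j + 2 * d)

section GradedFree

variable {K : Type} [Field K] {n : ℕ} {W : Type} [AddCommGroup W]
  [Module (MvPolynomial (Fin n) K) W] [Module K W] [IsScalarTower K (MvPolynomial (Fin n) K) W]

theorem IsGradedFreeOfRank.exists_homogeneous_basis {g : ℤ → Submodule K W} {c : ℤ →₀ ℕ}
    (hfree : IsGradedFreeOfRank K (MvPolynomial (Fin n) K) g c)
    (hg : IsCompatibleGrading K n g) :
    ∃ (T : Type) (v : Basis T K W) (δ : T → ℤ), (∀ t, v t ∈ g (δ t)) ∧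
      ∀ j, Finite {t // δ t = j} ∧ Nat.card {t // δ t = j} = gradedDim n j c := by
  obtain ⟨ι, _, bb, d, hbb, hc⟩ := hfree
  refine ⟨_, (MvPolynomial.basisMonomials (Fin n) K).smulTower bb,
    fun t => d t.2 + 2 * t.1.degree, fun ⟨m, i⟩ => ?_, fun j => ?_⟩
  · rw [Basis.smulTower_apply, MvPolynomial.coe_basisMonomials]
    exact hg _ _ (MvPolynomial.isHomogeneous_monomial 1 rfl) _ _ (hbb i)
  · let e : {t : (Fin n →₀ ℕ) × ι // d t.2 + 2 * t.1.degree = j} ≃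
        Σ i, {m : Fin n →₀ ℕ // 2 * (m.degree : ℤ) = j - d i} :=
      { toFun := fun t => ⟨t.1.2, t.1.1, by have := t.2; omega⟩
        invFun := fun s => ⟨(s.2.1, s.1), by have := s.2.2; dsimp only; omega⟩
        left_inv := fun _ => rfl
        right_inv := fun _ => rfl }
    have := fun i => finite_two_mul_degree_eq n (j - d i)
    exact ⟨Finite.of_equiv _ e.symm, by
      rw [Nat.card_congr e, Nat.card_sigma, gradedDim_eq_sum n d hc]; rfl⟩

namespace IsCompatibleGrading

variable {W' : Type} [AddCommGroup W'] [Module (MvPolynomial (Fin n) K) W'] [Module K W']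
  [IsScalarTower K (MvPolynomial (Fin n) K) W'] (f : W →ₗ[MvPolynomial (Fin n) K] W')

theorem map {g : ℤ → Submodule K W} (hg : IsCompatibleGrading K n g) :
    IsCompatibleGrading K n fun j => (g j).map (f.restrictScalars K) := by
  rintro d p hp j _ ⟨m, hm, rfl⟩
  exact ⟨p • m, hg d p hp j m hm, f.map_smul p m⟩

theorem comap {g : ℤ → Submodule K W'} (hg : IsCompatibleGrading K n g) :
    IsCompatibleGrading K n fun j => (g j).comap (f.restrictScalars K) := by
  intro d p hp j m hm
  simpa using hg d p hp j (f m) hm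

end IsCompatibleGrading

namespace IsGradedFreeOfRank

variable {g : ℤ → Submodule K W} {c : ℤ →₀ ℕ}
  (hfree : IsGradedFreeOfRank K (MvPolynomial (Fin n) K) g c) (hg : IsCompatibleGrading K n g)
include hfree hg

theorem gradedDim_le_finrank (j : ℤ) [FiniteDimensional K (g j)] :
    gradedDim n j c ≤ finrank K (g j) := by
  obtain ⟨T, v, δ, hv, hfib⟩ := hfree.exists_homogeneous_basis hg
  have := (hfib j).1
  exact (hfib j).2 ▸ v.natCard_fiber_le_finrank hv j

theorem finiteDimensional (hind : iSupIndep g) (j : ℤ) : FiniteDimensional K (g j) := by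
  obtain ⟨T, v, δ, hv, hfib⟩ := hfree.exists_homogeneous_basis hg
  have := (hfib j).1
  exact v.finiteDimensional_of_iSupIndep hv hind j

theorem finrank_eq (hind : iSupIndep g) (j : ℤ) : finrank K (g j) = gradedDim n j c := by
  obtain ⟨T, v, δ, hv, hfib⟩ := hfree.exists_homogeneous_basis hg
  have := (hfib j).1
  exact (hfib j).2 ▸ v.finrank_eq_natCard_fiber hv hind j

end IsGradedFreeOfRank

end GradedFree

/-- Let `K` be a field, `R = Sym(V)` (`V` in degree 2), `M` a finitely
generated graded free left `R`-module of graded rank `p`, and `0 = M₀ ⊆ ⋯ ⊆ M_r = M` a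
filtration by graded submodules.  If each subquotient `M_i/M_{i-1}` contains a graded free
submodule `N_i` of graded rank `q⁽ⁱ⁾` with `Σ_i q⁽ⁱ⁾ = p`, then `N_i = M_i/M_{i-1}`. -/
theorem statement15 (K : Type) [Field K] (n : ℕ)
    (M : Type) [AddCommGroup M] [Module (MvPolynomial (Fin n) K) M]
    [Module K M] [IsScalarTower K (MvPolynomial (Fin n) K) M]
    -- the grading of `M`, compatible with the grading of `R = Sym(V)`, `deg V = 2`
    (g : ℤ → Submodule K M)
    (hinternal : DirectSum.IsInternal g)
    (hcompat : ∀ (d : ℕ) (f : MvPolynomial (Fin n) K), f.IsHomogeneous d →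
      ∀ (j : ℤ), ∀ m ∈ g j, f • m ∈ g (j + 2 * d))
    -- `M` is graded free of graded rank `p`
    (p : ℤ →₀ ℕ) (hM : IsGradedFreeOfRank K (MvPolynomial (Fin n) K) g p)
    -- the filtration `0 = M₀ ⊆ M₁ ⊆ ⋯ ⊆ M_r = M` by graded submodules
    (r : ℕ) (F : ℕ → Submodule (MvPolynomial (Fin n) K) M)
    (hFmono : ∀ i, F i ≤ F (i + 1)) (hF0 : F 0 = ⊥) (hFr : F r = ⊤)
    (hFgraded : ∀ i, (F i).restrictScalars K =
      ⨆ j : ℤ, (F i).restrictScalars K ⊓ g j)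
    -- the graded free submodules `N_i ⊆ M_i/M_{i-1}`, given as `P i/M_i` for
    -- intermediate submodules `M_i ⊆ P i ⊆ M_{i+1}`
    (P : ℕ → Submodule (MvPolynomial (Fin n) K) M)
    (hP : ∀ i < r, F i ≤ P i ∧ P i ≤ F (i + 1))
    (q : ℕ → (ℤ →₀ ℕ))
    (hN : ∀ i < r, IsGradedFreeOfRank K (MvPolynomial (Fin n) K)
      ((fun j : ℤ => Submodule.comap
          (LinearMap.restrictScalars K (Submodule.subtype ((P i).map (F i).mkQ)))
          (Submodule.map (LinearMap.restrictScalars K (F i).mkQ) (g j))) :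
        ℤ → Submodule K ↥((P i).map (F i).mkQ))
      (q i))
    -- `Σ_i q⁽ⁱ⁾ = p`
    (hsum : (∑ i ∈ Finset.range r, q i) = p) :
    ∀ i < r, (P i).map (F i).mkQ = (F (i + 1)).map (F i).mkQ := by
  have hind := hinternal.submodule_iSupIndep
  have hg : IsCompatibleGrading K n g := hcompat
  intro i hi
  refine map_mkQ_eq_of_forall_le (hFgraded (i + 1)) (hP i hi).2 fun j => ?_
  have := hM.finiteDimensional hg hind j
  -- the degree-`j` pieces of `M_{k+1}/M_k` and of `N_k`
  let X k := ((F (k + 1)).restrictScalars K ⊓ g j).map ((F k).mkQ.restrictScalars K)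
  let Y k := ((P k).map (F k).mkQ).restrictScalars K ⊓ (g j).map ((F k).mkQ.restrictScalars K)
  have hYX : ∀ k < r, Y k ≤ X k := fun k hk =>
    restrictScalars_map_mkQ_inf_le (hFmono k) (hP k hk).2 _
  have hqY : ∀ k < r, gradedDim n j (q k) ≤ finrank K (Y k) := fun k hk => by
    have := finiteDimensional_of_le (hYX k hk)
    let e := comapSubtypeEquivInf ((P k).map (F k).mkQ) ((g j).map ((F k).mkQ.restrictScalars K))
    have := Module.Finite.equiv e.symm
    exact e.finrank_eq ▸ (hN k hk).gradedDim_le_finrank ((hg.map _).comap _) j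
  have hX : ∑ k ∈ Finset.range r, finrank K (X k) = finrank K (g j) := by
    have h := sum_finrank_map_mkQ_add_finrank hFmono (g j) r
    rwa [hF0, hFr, restrictScalars_bot, bot_inf_eq, finrank_bot, add_zero, restrictScalars_top,
      top_inf_eq] at h
  have hq : ∑ k ∈ Finset.range r, gradedDim n j (q k) = finrank K (g j) := by
    rw [← map_sum, hsum, hM.finrank_eq hg hind]
  have hfinrank_le : ∀ k ∈ Finset.range r, finrank K (Y k) ≤ finrank K (X k) := fun k hk =>
    finrank_mono (hYX k (Finset.mem_range.1 hk))
  have hsum_le :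
      ∑ k ∈ Finset.range r, finrank K (X k) ≤ ∑ k ∈ Finset.range r, finrank K (Y k) := by
    rw [hX, ← hq]
    exact Finset.sum_le_sum fun k hk => hqY k (Finset.mem_range.1 hk)
  have hfinrank_eq := (Finset.sum_eq_sum_iff_of_le hfinrank_le).1
    ((Finset.sum_le_sum hfinrank_le).antisymm hsum_le)
  exact (eq_of_le_of_finrank_eq (hYX i hi) (hfinrank_eq i (Finset.mem_range.2 hi))).symm.le.trans
    inf_le_left
end
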